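/- arXiv:1105.1622 — 6 statements merged into one kernel-verified Lean document; each statement's English description precedes it below -/
import Mathlib

section
/- Let G be a finite simple graph on n vertices that admits a proper 2-coloring. Suppose there is a vertex x of G such that for every proper 2-coloring c of G, the color class containing x is strictly larger than the other color class. Then G has at least ⌊n/2⌋ edges. -/
/-!
Take a proper 2-coloring `c` for which the color class `A` of `x` is as small as possible.
A vertex `v ≠ x` of `A` cannot be isolated: recoloring it would give a proper coloring in which
the class of `x` is `A \ {v}`. Since `A` is independent, the vertices of `A \ {x}` lie on pairwise
distinct edges, so `|A| - 1 ≤ |E|`; and `|A| > n - |A|` gives `|A| - 1 ≥ ⌊n/2⌋`.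
-/

open Finset

theorem Finset.filter_update_not_eq_erase {V : Type*} [Fintype V] [DecidableEq V]
    {c : V → Bool} {v x : V} (hvx : v ≠ x) (hv : c v = c x) :
    ({w | Function.update c v (!c v) w = Function.update c v (!c v) x} : Finset V) =
      ({w | c w = c x} : Finset V).erase v := by
  ext w
  rcases eq_or_ne w v with rfl | hwv
  · simp [Function.update_of_ne hvx.symm, hv]
  · simp [Function.update_of_ne hvx.symm, hwv]

namespace SimpleGraph

variable {V : Type*} (G : SimpleGraph V)

theorem card_le_card_edgeFinset_of_isIndepSet [Fintype G.edgeSet] {A : Finset V}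
    (hA : G.IsIndepSet (A : Set V)) (hnbr : ∀ v ∈ A, ∃ w, G.Adj v w) :
    #A ≤ #G.edgeFinset := by
  refine card_le_card_of_forall_subsingleton (fun v e => v ∈ e) ?_ ?_
  · intro v hv
    obtain ⟨w, hvw⟩ := hnbr v hv
    exact ⟨s(v, w), by simpa using hvw, Sym2.mem_mk_left v w⟩
  · intro e he v ⟨hvA, hve⟩ w ⟨hwA, hwe⟩
    by_contra hvw
    have he' : e = s(v, w) := Sym2.eq_of_ne_mem hvw hve hwe (Sym2.mem_mk_left v w)
      (Sym2.mem_mk_right v w)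
    rw [mem_edgeFinset, he', mem_edgeSet] at he
    exact hA hvA hwA hvw he

variable {G}

theorem isIndepSet_setOf_eq {c : V → Bool} (hc : ∀ u v, G.Adj u v → c u ≠ c v) (b : Bool) :
    G.IsIndepSet {v | c v = b} :=
  fun u hu w hw _ huw => hc u w huw (hu.trans hw.symm)

theorem proper_update_of_forall_not_adj {c : V → Bool} (hc : ∀ u v, G.Adj u v → c u ≠ c v)
    [DecidableEq V] {v : V} (hv : ∀ w, ¬ G.Adj v w) (b : Bool) :
    ∀ u w, G.Adj u w → Function.update c v b u ≠ Function.update c v b w := by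
  intro u w huw
  have hu : u ≠ v := by rintro rfl; exact hv w huw
  have hw : w ≠ v := by rintro rfl; exact hv u huw.symm
  simpa [Function.update_of_ne hu, Function.update_of_ne hw] using hc u w huw

variable [Fintype V] [DecidableEq V]

theorem exists_proper_minimizing_card_colorClass (x : V)
    (hcol : ∃ c : V → Bool, ∀ u v, G.Adj u v → c u ≠ c v) :
    ∃ c : V → Bool, (∀ u v, G.Adj u v → c u ≠ c v) ∧
      ∀ c' : V → Bool, (∀ u v, G.Adj u v → c' u ≠ c' v) →
        #{v | c v = c x} ≤ #{v | c' v = c' x} := by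
  classical
  obtain ⟨c₀, hc₀⟩ := hcol
  obtain ⟨c, hc, hmin⟩ := exists_min_image {c : V → Bool | ∀ u v, G.Adj u v → c u ≠ c v}
    (fun c => #{v | c v = c x}) ⟨c₀, by simpa using hc₀⟩
  exact ⟨c, by simpa using hc, fun c' hc' => hmin c' (by simpa using hc')⟩

theorem exists_adj_of_minimal_colorClass {c : V → Bool} {x : V}
    (hc : ∀ u v, G.Adj u v → c u ≠ c v)
    (hmin : ∀ c' : V → Bool, (∀ u v, G.Adj u v → c' u ≠ c' v) →
      #{v | c v = c x} ≤ #{v | c' v = c' x})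
    {v : V} (hvx : v ≠ x) (hv : c v = c x) : ∃ w, G.Adj v w := by
  by_contra! hiso
  have hle := hmin _ (proper_update_of_forall_not_adj hc hiso (!c v))
  rw [filter_update_not_eq_erase hvx hv, card_erase_of_mem (by simpa using hv)] at hle
  have hpos : 0 < #({w | c w = c x} : Finset V) := card_pos.mpr ⟨v, by simpa using hv⟩
  omega

theorem card_colorClass_le_card_edgeFinset_add_one [DecidableRel G.Adj] {c : V → Bool} {x : V}
    (hc : ∀ u v, G.Adj u v → c u ≠ c v)
    (hmin : ∀ c' : V → Bool, (∀ u v, G.Adj u v → c' u ≠ c' v) →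
      #{v | c v = c x} ≤ #{v | c' v = c' x}) :
    #{v | c v = c x} ≤ #G.edgeFinset + 1 := by
  have hindep : G.IsIndepSet (↑(({v | c v = c x} : Finset V).erase x) : Set V) :=
    (isIndepSet_setOf_eq hc (c x)).mono (by intro v; simp +contextual)
  have hle := G.card_le_card_edgeFinset_of_isIndepSet hindep fun v hv => by
    obtain ⟨hvx, hv⟩ := mem_erase.mp hv
    exact exists_adj_of_minimal_colorClass hc hmin hvx (by simpa using hv)
  rw [card_erase_of_mem (by simp)] at hle
  omega

end SimpleGraph

/-- Lemma A.1: if a graph `G` on `n` vertices admits a proper 2-coloring and some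
vertex `x` lies in the strictly larger color class of every proper 2-coloring,
then `G` has at least `⌊n/2⌋` edges. -/
theorem stmt_0 (n : ℕ) (G : SimpleGraph (Fin n)) [DecidableRel G.Adj]
    (hcol : ∃ c : Fin n → Bool, ∀ u v, G.Adj u v → c u ≠ c v)
    (x : Fin n)
    (hx : ∀ c : Fin n → Bool, (∀ u v, G.Adj u v → c u ≠ c v) →
      (Finset.univ.filter fun v => c v ≠ c x).card <
      (Finset.univ.filter fun v => c v = c x).card) :
    n / 2 ≤ G.edgeFinset.card := by
  obtain ⟨c, hc, hmin⟩ := G.exists_proper_minimizing_card_colorClass x hcol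
  have hlarger := hx c hc
  have hsplit := card_filter_add_card_filter_not (s := univ) (fun v => c v = c x)
  have hedges := SimpleGraph.card_colorClass_le_card_edgeFinset_add_one hc hmin
  simp only [card_univ, Fintype.card_fin, ← ne_eq] at hsplit
  omega
end

section
/- Let n be even and let G be a finite simple graph on n vertices that admits a proper 2-coloring. Suppose there is a vertex x of G such that for every proper 2-coloring c of G, the color class containing x is strictly larger than the other color class. Then G has at least n/2 + 1 edges. -/
/-!
Flip the colours on every component, other than that of `x`, in which `x`'s colour is the
majority. The new colouring is still proper, so `x`'s class is still strictly larger, hence (`n`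
being even) larger by at least two. That surplus must come from `x`'s own component, which is
therefore not a single vertex, so the class opposite to `x` now meets every component. Hence there
are at most `n / 2 - 1` components, and a graph has at least `n` minus its number of components
edges.
-/

open Finset

theorem Finset.card_le_card_add_card_filter_of_fiberwise_le {α β : Type*} [DecidableEq β]
    [Fintype β] {s t : Finset α} (f : α → β) (b₀ : β)
    (h : ∀ b ≠ b₀, #{a ∈ s | f a = b} ≤ #{a ∈ t | f a = b}) :
    #s ≤ #t + #{a ∈ s | f a = b₀} := by
  have hs := card_eq_sum_card_fiberwise (s := s) (t := univ) (f := f) fun a _ => mem_univ _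
  have ht := card_eq_sum_card_fiberwise (s := t) (t := univ) (f := f) fun a _ => mem_univ _
  rw [← add_sum_erase _ _ (mem_univ b₀)] at hs
  calc #s = #{a ∈ s | f a = b₀} + ∑ b ∈ univ.erase b₀, #{a ∈ s | f a = b} := hs
    _ ≤ #{a ∈ s | f a = b₀} + ∑ b ∈ univ.erase b₀, #{a ∈ t | f a = b} := by
      grw [sum_le_sum fun b hb => h b (ne_of_mem_erase hb)]
    _ ≤ #{a ∈ s | f a = b₀} + #t := by
      rw [ht]
      gcongr
      exact erase_subset _ _
    _ = #t + #{a ∈ s | f a = b₀} := add_comm _ _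

namespace SimpleGraph

variable {V : Type*} {G : SimpleGraph V}

def IsProperTwoColoring (G : SimpleGraph V) (c : V → Bool) : Prop :=
  ∀ u v, G.Adj u v → c u ≠ c v

theorem Reachable.exists_adj_dist_lt {u v : V} (h : G.Reachable u v) (hne : u ≠ v) :
    ∃ w, G.Adj u w ∧ G.dist w v < G.dist u v := by
  obtain ⟨p, hp⟩ := h.exists_walk_length_eq_dist
  cases p with
  | nil => exact absurd rfl hne
  | cons hadj q => exact ⟨_, hadj, (dist_le q).trans_lt (by simp [← hp])⟩

/-- Every vertex other than a chosen representative of its component is sent to the edge towards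
a neighbour closer to that representative; this injects the non-representatives into the edges. -/
theorem card_le_card_edgeFinset_add_card_connectedComponent [Fintype V] [DecidableEq V]
    (G : SimpleGraph V) [DecidableRel G.Adj] :
    Fintype.card V ≤ #G.edgeFinset + Fintype.card G.ConnectedComponent := by
  set root : V → V := fun v => (G.connectedComponentMk v).out
  set roots := univ.image fun K : G.ConnectedComponent => K.out
  have hparent :
      ∀ v, ∃ u, v ∉ roots → G.Adj v u ∧ G.dist u (root v) < G.dist v (root v) := by
    intro v
    by_cases hv : v = root v
    · exact ⟨v, fun h => absurd (hv ▸ mem_image_of_mem _ (mem_univ _)) h⟩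
    · obtain ⟨u, hu⟩ := (ConnectedComponent.exact (G.connectedComponentMk v).out_eq.symm
        : G.Reachable v (root v)).exists_adj_dist_lt hv
      exact ⟨u, fun _ => hu⟩
  choose p hp using hparent
  have hroots : #roots ≤ Fintype.card G.ConnectedComponent := card_image_le
  have hrest : #rootsᶜ ≤ #G.edgeFinset := by
    refine card_le_card_of_injOn (fun v => s(v, p v)) (fun v hv => ?_) fun v hv w hw hvw => ?_
    · simpa using (hp v (mem_compl.mp hv)).1
    · obtain ⟨hvw, -⟩ | ⟨rfl, hpv⟩ := Sym2.eq_iff.mp hvw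
      · exact hvw
      · have hv := hp (p w) (mem_compl.mp hv)
        have hw := hp w (mem_compl.mp hw)
        have hroot : root (p w) = root w := by
          simp only [root, ConnectedComponent.sound hw.1.reachable.symm]
        rw [hroot, hpv] at hv
        omega
  have := card_add_card_compl roots
  omega

namespace IsProperTwoColoring

variable {c : V → Bool}

theorem xor_connectedComponentMk (hc : G.IsProperTwoColoring c)
    (f : G.ConnectedComponent → Bool) :
    G.IsProperTwoColoring fun v => xor (f (G.connectedComponentMk v)) (c v) := by
  intro u v huv
  dsimp only
  rw [ConnectedComponent.sound huv.reachable]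
  simpa using hc u v huv

theorem exists_adj_ne_of_connectedComponentMk_eq (hc : G.IsProperTwoColoring c) {x y : V}
    (hxy : G.connectedComponentMk y = G.connectedComponentMk x) (hne : x ≠ y) :
    ∃ u, G.connectedComponentMk u = G.connectedComponentMk x ∧ c u ≠ c x := by
  obtain ⟨u, hxu, -⟩ := (ConnectedComponent.exact hxy.symm).exists_adj_dist_lt hne
  exact ⟨u, (ConnectedComponent.sound hxu.reachable).symm, (hc x u hxu).symm⟩

variable [Fintype V] [DecidableEq G.ConnectedComponent]

theorem exists_minority_off_connectedComponentMk (hc : G.IsProperTwoColoring c) (x : V) :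
    ∃ c', G.IsProperTwoColoring c' ∧ ∀ K ≠ G.connectedComponentMk x,
      #{v ∈ {v | c' v = c' x} | G.connectedComponentMk v = K} ≤
        #{v ∈ {v | c' v ≠ c' x} | G.connectedComponentMk v = K} := by
  let t : G.ConnectedComponent → Bool := fun K => decide (K ≠ G.connectedComponentMk x ∧
    #{v ∈ {v | c v = !c x} | G.connectedComponentMk v = K} <
      #{v ∈ {v | c v = c x} | G.connectedComponentMk v = K})
  refine ⟨_, hc.xor_connectedComponentMk t, fun K hK => ?_⟩
  have htx : t (G.connectedComponentMk x) = false := by simp [t]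
  have hfiber (b : Bool) :
      #{v ∈ {v | xor (t (G.connectedComponentMk v)) (c v) = b} | G.connectedComponentMk v = K} =
        #{v ∈ {v | c v = xor (t K) b} | G.connectedComponentMk v = K} := by
    simp only [filter_filter]
    congr 1
    refine filter_congr fun v _ => and_congr_left fun hv => ?_
    rw [hv]
    cases t K <;> cases b <;> simp
  simp only [htx, Bool.false_xor, ne_eq, ← Bool.eq_not, hfiber]
  cases htK : t K
  · simp only [t, decide_eq_false_iff_not, not_and, not_lt] at htK
    simpa using htK hK
  · simp only [t, decide_eq_true_eq] at htK
    simpa using htK.2.le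

/-- In `x`'s component the class of `x` has a second vertex, so `x` has a neighbour; in every
other component the class opposite to `x` is the majority. -/
theorem card_connectedComponent_le_card_filter_ne [DecidableEq V] [DecidableRel G.Adj]
    (hc : G.IsProperTwoColoring c) (x : V)
    (hminority : ∀ K ≠ G.connectedComponentMk x,
      #{v ∈ {v | c v = c x} | G.connectedComponentMk v = K} ≤
        #{v ∈ {v | c v ≠ c x} | G.connectedComponentMk v = K})
    (hmajority : #{v | c v ≠ c x} + 2 ≤ #{v | c v = c x}) :
    Fintype.card G.ConnectedComponent ≤ #{v | c v ≠ c x} := by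
  rw [← card_univ]
  refine card_le_card_of_surjOn G.connectedComponentMk fun K _ => ?_
  by_cases hK : K = G.connectedComponentMk x
  · subst hK
    have := card_le_card_add_card_filter_of_fiberwise_le _ _ hminority
    obtain ⟨y, hy, hyx⟩ := exists_mem_ne
      (s := {v ∈ {v | c v = c x} | G.connectedComponentMk v = G.connectedComponentMk x})
      (by omega) x
    simp only [mem_filter, mem_univ, true_and] at hy
    obtain ⟨u, hu, hcu⟩ := hc.exists_adj_ne_of_connectedComponentMk_eq hy.2 (Ne.symm hyx)
    exact ⟨u, by simpa using hcu, hu⟩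
  · induction K using ConnectedComponent.ind with | h v => ?_
    by_cases hv : c v = c x
    · have hpos :
          0 < #{w ∈ {w | c w = c x} | G.connectedComponentMk w = G.connectedComponentMk v} :=
        card_pos.mpr ⟨v, by simp [hv]⟩
      obtain ⟨u, hu⟩ := card_pos.mp (hpos.trans_le (hminority _ hK))
      simp only [mem_filter, mem_univ, true_and] at hu
      exact ⟨u, by simpa using hu.1, hu.2⟩
    · exact ⟨v, by simpa using hv, rfl⟩

end IsProperTwoColoring

end SimpleGraph

/-- For even `n`: if a graph `G` on `n` vertices admits a proper 2-coloring and some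
vertex `x` lies in the strictly larger color class of every proper 2-coloring,
then `G` has at least `n/2 + 1` edges. -/
theorem stmt_1 (n : ℕ) (hn : Even n) (G : SimpleGraph (Fin n)) [DecidableRel G.Adj]
    (hcol : ∃ c : Fin n → Bool, ∀ u v, G.Adj u v → c u ≠ c v)
    (x : Fin n)
    (hx : ∀ c : Fin n → Bool, (∀ u v, G.Adj u v → c u ≠ c v) →
      (Finset.univ.filter fun v => c v ≠ c x).card <
      (Finset.univ.filter fun v => c v = c x).card) :
    n / 2 + 1 ≤ G.edgeFinset.card := by
  classical
  obtain ⟨c, hc⟩ := hcol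
  obtain ⟨c', hc', hminority⟩ :=
    SimpleGraph.IsProperTwoColoring.exists_minority_off_connectedComponentMk (G := G) hc x
  have hlt := hx c' hc'
  have hsplit : #{v | c' v = c' x} + #{v | c' v ≠ c' x} = n := by
    simpa using card_filter_add_card_filter_not (s := univ) (p := fun v => c' v = c' x)
  have hmajority : #{v | c' v ≠ c' x} + 2 ≤ #{v | c' v = c' x} := by
    obtain ⟨k, rfl⟩ := hn
    omega
  have hcomponents := hc'.card_connectedComponent_le_card_filter_ne x hminority hmajority
  have hedges := G.card_le_card_edgeFinset_add_card_connectedComponent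
  rw [Fintype.card_fin] at hedges
  omega
end

section
/- Let k ≥ 3 and let G be a finite simple graph on n = 2k−3 vertices that admits a proper 2-coloring, and suppose that every k-element subset of the vertices of G contains at least one edge of G. Then there exists a vertex x of G such that for every proper 2-coloring c of G, the color class containing x is strictly larger than the other color class. -/
/-!
Every independent set has fewer than `k` vertices, so the two classes of a proper
2-coloring of the `2k - 3` vertices have sizes `k - 1` and `k - 2`: every proper coloring is
unbalanced by exactly one. Fix a proper coloring `c₀` and its majority color `b`, and weigh a
vertex `+1` if `c₀` gives it `b` and `-1` otherwise. Any other proper coloring is `c₀` recolored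
on a union `D` of components, and the balance condition forces the weight of every such `D` to
be `0` or `1`. Since weight is modular, the unions of components of weight `1` are closed under
intersection; the least one `T` lies inside every `D` of weight `1` and is disjoint from every
`D` of weight `0`. Any `x ∈ T` with `c₀ x = b` is then in the majority class of every proper
coloring.
-/

open Finset

variable {V : Type*}

def signedCount (c : V → Bool) (b : Bool) (s : Finset V) : ℤ :=
  ∑ v ∈ s, if c v = b then 1 else -1

lemma signedCount_eq_card_sub_card (c : V → Bool) (b : Bool) (s : Finset V) :
    signedCount c b s = #(s.filter fun v => c v = b) - #(s.filter fun v => c v ≠ b) := by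
  simp only [signedCount, sum_ite, sum_const, smul_neg, nsmul_eq_mul, mul_one, ne_eq]
  ring

lemma signedCount_not (c : V → Bool) (b : Bool) (s : Finset V) :
    signedCount c (!b) s = -signedCount c b s := by
  simp only [signedCount, ← sum_neg_distrib]
  refine sum_congr rfl fun v _ => ?_
  cases c v <;> cases b <;> rfl

lemma signedCount_union_add_inter [DecidableEq V] (c : V → Bool) (b : Bool) (s t : Finset V) :
    signedCount c b (s ∪ t) + signedCount c b (s ∩ t) = signedCount c b s + signedCount c b t :=
  sum_union_inter

lemma signedCount_compl [Fintype V] [DecidableEq V] (c : V → Bool) (b : Bool) (s : Finset V) :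
    signedCount c b (univ \ s) = signedCount c b univ - signedCount c b s := by
  rw [eq_sub_iff_add_eq]
  exact sum_sdiff (subset_univ s)

lemma signedCount_univ_eq_sub_two_mul [Fintype V] (c c₀ : V → Bool) (b : Bool) :
    signedCount c b univ =
      signedCount c₀ b univ - 2 * signedCount c₀ b (univ.filter fun v => c v ≠ c₀ v) := by
  simp only [signedCount, sum_filter, mul_sum, ← sum_sub_distrib]
  refine sum_congr rfl fun v _ => ?_
  cases c v <;> cases c₀ v <;> cases b <;> decide

namespace SimpleGraph

variable (G : SimpleGraph V)

def IsProperColoring {α : Type*} (c : V → α) : Prop :=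
  ∀ u v, G.Adj u v → c u ≠ c v

/-- `s` is a union of connected components of `G`. -/
def IsAdjClosed (s : Finset V) : Prop :=
  ∀ u v, G.Adj u v → (u ∈ s ↔ v ∈ s)

variable {G}

lemma IsAdjClosed.inter [DecidableEq V] {s t : Finset V} (hs : G.IsAdjClosed s)
    (ht : G.IsAdjClosed t) : G.IsAdjClosed (s ∩ t) := fun u v huv => by
  simp only [mem_inter, hs u v huv, ht u v huv]

lemma IsAdjClosed.union [DecidableEq V] {s t : Finset V} (hs : G.IsAdjClosed s)
    (ht : G.IsAdjClosed t) : G.IsAdjClosed (s ∪ t) := fun u v huv => by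
  simp only [mem_union, hs u v huv, ht u v huv]

lemma IsAdjClosed.compl [Fintype V] [DecidableEq V] {s : Finset V} (hs : G.IsAdjClosed s) :
    G.IsAdjClosed (univ \ s) := fun u v huv => by
  simp only [mem_sdiff, mem_univ, true_and, hs u v huv]

lemma isAdjClosed_univ [Fintype V] : G.IsAdjClosed univ := fun u v _ => by
  simp only [mem_univ]

lemma IsProperColoring.isAdjClosed_disagreement [Fintype V] {c c₀ : V → Bool}
    (hc : G.IsProperColoring c) (hc₀ : G.IsProperColoring c₀) :
    G.IsAdjClosed (univ.filter fun v => c v ≠ c₀ v) := fun u v huv => by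
  have h := hc u v huv
  have h₀ := hc₀ u v huv
  simp only [mem_filter, mem_univ, true_and]
  revert h h₀
  cases c u <;> cases c v <;> cases c₀ u <;> cases c₀ v <;> decide

lemma IsProperColoring.exists_disagreement_eq [Fintype V] [DecidableEq V] {c₀ : V → Bool}
    (hc₀ : G.IsProperColoring c₀) {s : Finset V} (hs : G.IsAdjClosed s) :
    ∃ c, G.IsProperColoring c ∧ (univ.filter fun v => c v ≠ c₀ v) = s := by
  refine ⟨fun v => c₀ v ^^ decide (v ∈ s), fun u v huv => ?_, ?_⟩
  · simp only [hs u v huv]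
    have := hc₀ u v huv
    cases decide (v ∈ s) <;> simpa
  · ext v
    by_cases hv : v ∈ s <;> simp [hv]

lemma IsProperColoring.card_filter_lt [Fintype V] {α : Type*} [DecidableEq α] {k : ℕ}
    (hcover : ∀ s : Finset V, #s = k → ∃ u ∈ s, ∃ v ∈ s, G.Adj u v)
    {c : V → α} (hc : G.IsProperColoring c) (a : α) :
    #(univ.filter fun v => c v = a) < k := by
  by_contra! hk
  obtain ⟨s, hs, rfl⟩ := exists_subset_card_eq hk
  obtain ⟨u, hu, v, hv, huv⟩ := hcover s rfl
  exact hc u v huv ((mem_filter.1 (hs hu)).2.trans (mem_filter.1 (hs hv)).2.symm)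

lemma IsProperColoring.abs_signedCount_univ_eq_one [Fintype V] {k : ℕ} (hk : 2 ≤ k)
    (hV : Fintype.card V = 2 * k - 3)
    (hcover : ∀ s : Finset V, #s = k → ∃ u ∈ s, ∃ v ∈ s, G.Adj u v)
    {c : V → Bool} (hc : G.IsProperColoring c) (b : Bool) : |signedCount c b univ| = 1 := by
  have hb := hc.card_filter_lt hcover b
  have hnb := hc.card_filter_lt hcover (!b)
  have hsum := card_filter_add_card_filter_not (s := univ) (p := fun v => c v = b)
  simp only [← ne_eq, ← Bool.eq_not_iff, card_univ, hV] at hsum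
  rw [signedCount_eq_card_sub_card, abs_eq zero_le_one]
  simp only [← Bool.eq_not_iff]
  omega

section Majority

variable [Fintype V] [DecidableEq V] {G : SimpleGraph V} {c₀ : V → Bool} {b : Bool}

lemma IsProperColoring.signedCount_eq_zero_or_one (hc₀ : G.IsProperColoring c₀)
    (hbal : ∀ c, G.IsProperColoring c → ∀ b, |signedCount c b univ| = 1)
    (hb : signedCount c₀ b univ = 1) {s : Finset V} (hs : G.IsAdjClosed s) :
    signedCount c₀ b s = 0 ∨ signedCount c₀ b s = 1 := by
  obtain ⟨c, hc, rfl⟩ := hc₀.exists_disagreement_eq hs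
  have h := hbal c hc b
  rw [signedCount_univ_eq_sub_two_mul c c₀, hb] at h
  rcases abs_eq zero_le_one |>.1 h with h | h <;> omega

lemma IsProperColoring.minimal_subset_of_signedCount_eq_one (hc₀ : G.IsProperColoring c₀)
    (hbal : ∀ c, G.IsProperColoring c → ∀ b, |signedCount c b univ| = 1)
    (hb : signedCount c₀ b univ = 1) {t : Finset V}
    (ht : Minimal (fun s => G.IsAdjClosed s ∧ signedCount c₀ b s = 1) t) {s : Finset V}
    (hs : G.IsAdjClosed s) (hs₁ : signedCount c₀ b s = 1) : t ⊆ s := by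
  have hunion := hc₀.signedCount_eq_zero_or_one hbal hb (ht.prop.1.union hs)
  have hinter := hc₀.signedCount_eq_zero_or_one hbal hb (ht.prop.1.inter hs)
  have hmod := signedCount_union_add_inter c₀ b t s
  have ht₁ := ht.prop.2
  have : t ⊆ t ∩ s := ht.le_of_le ⟨ht.prop.1.inter hs, by omega⟩ inter_subset_left
  exact this.trans inter_subset_right

lemma IsProperColoring.minimal_disjoint_of_signedCount_eq_zero (hc₀ : G.IsProperColoring c₀)
    (hbal : ∀ c, G.IsProperColoring c → ∀ b, |signedCount c b univ| = 1)
    (hb : signedCount c₀ b univ = 1) {t : Finset V}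
    (ht : Minimal (fun s => G.IsAdjClosed s ∧ signedCount c₀ b s = 1) t) {s : Finset V}
    (hs : G.IsAdjClosed s) (hs₀ : signedCount c₀ b s = 0) : Disjoint t s := by
  have hcompl : signedCount c₀ b (univ \ s) = 1 := by rw [signedCount_compl, hb, hs₀, sub_zero]
  exact disjoint_of_subset_left
    (hc₀.minimal_subset_of_signedCount_eq_one hbal hb ht hs.compl hcompl) sdiff_disjoint

theorem IsProperColoring.exists_forall_signedCount_pos (hc₀ : G.IsProperColoring c₀)
    (hbal : ∀ c, G.IsProperColoring c → ∀ b, |signedCount c b univ| = 1) :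
    ∃ x, ∀ c, G.IsProperColoring c → 0 < signedCount c (c x) univ := by
  obtain ⟨b, hb⟩ : ∃ b, signedCount c₀ b univ = 1 := by
    rcases abs_eq zero_le_one |>.1 (hbal c₀ hc₀ true) with h | h
    · exact ⟨true, h⟩
    · exact ⟨false, by rw [← Bool.not_true, signedCount_not, h, neg_neg]⟩
  obtain ⟨t, ht⟩ := exists_minimal_of_wellFoundedLT
    (fun s => G.IsAdjClosed s ∧ signedCount c₀ b s = 1) ⟨univ, isAdjClosed_univ, hb⟩
  obtain ⟨x, hxt, hx⟩ : ∃ x ∈ t, 0 < if c₀ x = b then (1 : ℤ) else -1 :=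
    exists_lt_of_sum_lt <| by
      rw [sum_const_zero, ← signedCount, ht.prop.2]
      exact one_pos
  have hxb : c₀ x = b := by by_contra h; simp [h] at hx
  refine ⟨x, fun c hc => ?_⟩
  have hD := hc.isAdjClosed_disagreement hc₀
  have hcount := signedCount_univ_eq_sub_two_mul c c₀ b
  rcases hc₀.signedCount_eq_zero_or_one hbal hb hD with h | h
  · have hx : c x = b := by
      by_contra hne
      refine Finset.disjoint_left.1
        (hc₀.minimal_disjoint_of_signedCount_eq_zero hbal hb ht hD h) hxt ?_
      simpa [hxb] using hne
    rw [hx, hcount, hb, h]; norm_num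
  · have hx : c x = !b := by
      have := mem_filter.1 (hc₀.minimal_subset_of_signedCount_eq_one hbal hb ht hD h hxt)
      exact Bool.eq_not_iff.2 (hxb ▸ this.2)
    rw [hx, signedCount_not, hcount, hb, h]; norm_num

end Majority

end SimpleGraph

/-- If `k ≥ 3` and `G` is a 2-colorable graph on `n = 2k-3` vertices such that every
`k`-element vertex subset contains an edge, then some vertex `x` lies in the strictly
larger color class of every proper 2-coloring of `G`. -/
theorem stmt_4 (k : ℕ) (hk : 3 ≤ k) (G : SimpleGraph (Fin (2 * k - 3)))
    (hcol : ∃ c : Fin (2 * k - 3) → Bool, ∀ u v, G.Adj u v → c u ≠ c v)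
    (hcover : ∀ s : Finset (Fin (2 * k - 3)), s.card = k →
      ∃ u ∈ s, ∃ v ∈ s, G.Adj u v) :
    ∃ x : Fin (2 * k - 3), ∀ c : Fin (2 * k - 3) → Bool,
      (∀ u v, G.Adj u v → c u ≠ c v) →
      (Finset.univ.filter fun v => c v ≠ c x).card <
      (Finset.univ.filter fun v => c v = c x).card := by
  obtain ⟨c₀, hc₀⟩ := hcol
  have hbal (c) (hc : G.IsProperColoring c) (b : Bool) : |signedCount c b univ| = 1 :=
    hc.abs_signedCount_univ_eq_one (by omega) (Fintype.card_fin _) hcover b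
  obtain ⟨x, hx⟩ := SimpleGraph.IsProperColoring.exists_forall_signedCount_pos hc₀ hbal
  refine ⟨x, fun c hc => ?_⟩
  have := hx c hc
  rw [signedCount_eq_card_sub_card] at this
  omega
end

section
/- Let m ≥ 2, let S be a finite set with |S| = 2m, and let X ⊆ S with |X| = m. Let F be a finite family of 3-element subsets of S such that: (i) no member of F is contained in X and no member of F is contained in S∖X; (ii) for every x ∈ X there exists Q ∈ F with Q ⊆ (S∖X) ∪ {x}; (iii) for every y ∈ S∖X there exists Q ∈ F with Q ⊆ X ∪ {y}. Then |F| ≥ 2m. -/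
/-- Set-family counting from Case 1 of Lemma 3.4: with `|S| = 2m`, `|X| = m`, a family
`F` of 3-subsets of `S` none inside `X` or `S \ X`, such that every `x ∈ X` has a member
inside `(S \ X) ∪ {x}` and every `y ∈ S \ X` has a member inside `X ∪ {y}`, satisfies
`2m ≤ |F|`. -/
theorem stmt_6 {α : Type*} [DecidableEq α] (m : ℕ) (hm : 2 ≤ m)
    (S : Finset α) (hS : S.card = 2 * m)
    (X : Finset α) (hXS : X ⊆ S) (hX : X.card = m)
    (F : Finset (Finset α))
    (hF3 : ∀ Q ∈ F, Q ⊆ S ∧ Q.card = 3)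
    (hi : ∀ Q ∈ F, ¬ Q ⊆ X ∧ ¬ Q ⊆ S \ X)
    (hii : ∀ x ∈ X, ∃ Q ∈ F, Q ⊆ (S \ X) ∪ {x})
    (hiii : ∀ y ∈ S \ X, ∃ Q ∈ F, Q ⊆ X ∪ {y}) :
    2 * m ≤ F.card := by
  -- key facts
  have key : ∀ x ∈ X, ∃ Q ∈ F, Q ∩ X = {x} := by
    intro x hx
    obtain ⟨Q, hQF, hQsub⟩ := hii x hx
    refine ⟨Q, hQF, ?_⟩
    have hsub : Q ∩ X ⊆ {x} := by
      intro a ha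
      simp only [Finset.mem_inter] at ha
      have := hQsub ha.1
      simp only [Finset.mem_union, Finset.mem_sdiff, Finset.mem_singleton] at this ⊢
      tauto
    have hxQ : x ∈ Q := by
      by_contra hxQ
      exact (hi Q hQF).2 (fun a ha => by
        have := hQsub ha
        simp only [Finset.mem_union, Finset.mem_singleton] at this
        rcases this with h | h
        · exact h
        · exact absurd (h ▸ ha) hxQ)
    exact Finset.Subset.antisymm hsub (by
      simp [Finset.singleton_subset_iff, Finset.mem_inter, hxQ, hx])
  have key' : ∀ y ∈ S \ X, ∃ Q ∈ F, Q ∩ (S \ X) = {y} := by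
    intro y hy
    obtain ⟨Q, hQF, hQsub⟩ := hiii y hy
    refine ⟨Q, hQF, ?_⟩
    have hsub : Q ∩ (S \ X) ⊆ {y} := by
      intro a ha
      simp only [Finset.mem_inter, Finset.mem_sdiff] at ha
      have := hQsub ha.1
      simp only [Finset.mem_union, Finset.mem_singleton] at this ⊢
      tauto
    have hyQ : y ∈ Q := by
      by_contra hyQ
      exact (hi Q hQF).1 (fun a ha => by
        have := hQsub ha
        simp only [Finset.mem_union, Finset.mem_singleton] at this
        rcases this with h | h
        · exact h
        · exact absurd (h ▸ ha) hyQ)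
    exact Finset.Subset.antisymm hsub (by
      simp only [Finset.singleton_subset_iff, Finset.mem_inter]
      exact ⟨hyQ, hy⟩)
  -- card splitting: for Q ∈ F, card (Q∩X) + card (Q∩(S\X)) = 3
  have split : ∀ Q ∈ F, (Q ∩ X).card + (Q ∩ (S \ X)).card = 3 := by
    intro Q hQ
    obtain ⟨hQS, hQ3⟩ := hF3 Q hQ
    have hdisj : Disjoint (Q ∩ X) (Q ∩ (S \ X)) := by
      apply Finset.disjoint_left.mpr
      intro a ha ha'
      simp only [Finset.mem_inter, Finset.mem_sdiff] at ha ha'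
      exact ha'.2.2 ha.2
    have hun : (Q ∩ X) ∪ (Q ∩ (S \ X)) = Q := by
      ext a
      simp only [Finset.mem_union, Finset.mem_inter, Finset.mem_sdiff]
      constructor
      · tauto
      · intro ha
        by_cases hax : a ∈ X
        · exact Or.inl ⟨ha, hax⟩
        · exact Or.inr ⟨ha, hQS ha, hax⟩
    rw [← Finset.card_union_of_disjoint hdisj, hun, hQ3]
  classical
  -- define the map
  set f : α → Finset α := fun a =>
    if h : a ∈ X then (key a h).choose
    else if h' : a ∈ S \ X then (key' a h').choose
    else ∅ with hf
  have hfX : ∀ a (h : a ∈ X), f a ∈ F ∧ f a ∩ X = {a} := by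
    intro a h
    simp only [hf, dif_pos h]
    exact ⟨(key a h).choose_spec.1, (key a h).choose_spec.2⟩
  have hfY : ∀ a (h : a ∈ S \ X), f a ∈ F ∧ f a ∩ (S \ X) = {a} := by
    intro a h
    have hnX : a ∉ X := (Finset.mem_sdiff.mp h).2
    simp only [hf, dif_neg hnX, dif_pos h]
    exact ⟨(key' a h).choose_spec.1, (key' a h).choose_spec.2⟩
  have hmem : ∀ a ∈ S, f a ∈ F := by
    intro a ha
    by_cases h : a ∈ X
    · exact (hfX a h).1
    · exact (hfY a (Finset.mem_sdiff.mpr ⟨ha, h⟩)).1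
  have hinj : Set.InjOn f S := by
    intro a ha b hb hab
    by_cases hax : a ∈ X <;> by_cases hbx : b ∈ X
    · have h1 := (hfX a hax).2
      have h2 := (hfX b hbx).2
      rw [hab, h2] at h1
      exact (Finset.singleton_injective h1.symm)
    · -- a ∈ X, b ∉ X : contradiction via cardinalities
      exfalso
      have hb' : b ∈ S \ X := Finset.mem_sdiff.mpr ⟨hb, hbx⟩
      have h1 := (hfX a hax).2
      have h2 := (hfY b hb').2
      have hs := split (f a) ((hfX a hax).1)
      rw [h1, hab, h2] at hs
      simp at hs
    · exfalso
      have ha' : a ∈ S \ X := Finset.mem_sdiff.mpr ⟨ha, hax⟩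
      have h1 := (hfY a ha').2
      have h2 := (hfX b hbx).2
      have hs := split (f a) ((hfY a ha').1)
      rw [h1, hab, h2] at hs
      simp at hs
    · have ha' : a ∈ S \ X := Finset.mem_sdiff.mpr ⟨ha, hax⟩
      have hb' : b ∈ S \ X := Finset.mem_sdiff.mpr ⟨hb, hbx⟩
      have h1 := (hfY a ha').2
      have h2 := (hfY b hb').2
      rw [hab, h2] at h1
      exact (Finset.singleton_injective h1.symm)
  calc 2 * m = S.card := hS.symm
    _ ≤ F.card := Finset.card_le_card_of_injOn f hmem hinj
end

section
/- Let m ≥ 3, let S be a finite set with |S| = 2m, let X ⊆ S with |X| = m, and let Q₀ ⊆ X with |Q₀| = 3. Let F be a finite family of 3-element subsets of S such that: (i) no member of F is contained in X and no member of F is contained in S∖X; (ii) for every x ∈ X∖Q₀ there exists Q ∈ F with Q ⊆ (S∖X) ∪ {x}; (iii) for every y ∈ S∖X there exists Q ∈ F with Q ⊆ X ∪ {y}. Then |F| ≥ 2m − 3. -/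
/-!
Every `x ∈ X \ Q₀` is the unique `X`-point of some member of `F`, and every `y ∈ S \ X` is the
unique `(S \ X)`-point of some member of `F`. Members with exactly one point in `X` are thus at
least `m - 3`, those with exactly one point in `S \ X` at least `m`, and no triple has exactly
one point on each side.
-/

namespace Finset

variable {α : Type*} [DecidableEq α]

theorem card_inter_add_card_inter_sdiff {Q S : Finset α} (hQ : Q ⊆ S) (X : Finset α) :
    #(Q ∩ X) + #(Q ∩ (S \ X)) = #Q := by
  rw [← inter_sdiff_assoc, inter_eq_left.2 hQ, card_inter_add_card_sdiff]

theorem inter_nonempty_of_not_subset_sdiff {Q S X : Finset α} (hQ : Q ⊆ S)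
    (h : ¬ Q ⊆ S \ X) : (Q ∩ X).Nonempty := by
  obtain ⟨q, hqQ, hqSX⟩ := not_subset.1 h
  exact ⟨q, mem_inter.2 ⟨hqQ, by_contra fun hqX => hqSX (mem_sdiff.2 ⟨hQ hqQ, hqX⟩)⟩⟩

theorem inter_sdiff_nonempty_of_not_subset {Q S X : Finset α} (hQ : Q ⊆ S) (h : ¬ Q ⊆ X) :
    (Q ∩ (S \ X)).Nonempty := by
  obtain ⟨q, hqQ, hqX⟩ := not_subset.1 h
  exact ⟨q, mem_inter.2 ⟨hqQ, mem_sdiff.2 ⟨hQ hqQ, hqX⟩⟩⟩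

theorem inter_eq_singleton_of_subset_union_singleton {Q U T : Finset α} {x : α}
    (hQ : Q ⊆ U ∪ {x}) (hUT : Disjoint U T) (hne : (Q ∩ T).Nonempty) : Q ∩ T = {x} := by
  refine hne.subset_singleton_iff.1 fun q hq => ?_
  rw [mem_inter] at hq
  rcases mem_union.1 (hQ hq.1) with hqU | hqx
  · exact absurd hq.2 (disjoint_left.1 hUT hqU)
  · exact hqx

theorem card_le_card_filter_card_inter_eq_one {I T : Finset α} {F : Finset (Finset α)}
    (h : ∀ i ∈ I, ∃ Q ∈ F, Q ∩ T = {i}) : #I ≤ #{Q ∈ F | #(Q ∩ T) = 1} := by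
  set G := {Q ∈ F | #(Q ∩ T) = 1}
  have hI : I ⊆ G.biUnion (· ∩ T) := fun i hi => by
    obtain ⟨Q, hQ, hQT⟩ := h i hi
    exact mem_biUnion.2 ⟨Q, mem_filter.2 ⟨hQ, by simp [hQT]⟩, by simp [hQT]⟩
  calc #I ≤ #(G.biUnion (· ∩ T)) := card_le_card hI
    _ ≤ ∑ Q ∈ G, #(Q ∩ T) := card_biUnion_le
    _ ≤ #G • 1 := sum_le_card_nsmul _ _ _ fun Q hQ => (mem_filter.1 hQ).2.le
    _ = #G := by rw [smul_eq_mul, mul_one]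

end Finset

open Finset

theorem stmt_7_general {α : Type*} [DecidableEq α] (m : ℕ)
    (S : Finset α) (hS : S.card = 2 * m)
    (X : Finset α) (hX : X.card = m)
    (Q₀ : Finset α) (hQ₀ : Q₀.card = 3)
    (F : Finset (Finset α))
    (hF3 : ∀ Q ∈ F, Q ⊆ S ∧ Q.card = 3)
    (hi : ∀ Q ∈ F, ¬ Q ⊆ X ∧ ¬ Q ⊆ S \ X)
    (hii : ∀ x ∈ X \ Q₀, ∃ Q ∈ F, Q ⊆ (S \ X) ∪ {x})
    (hiii : ∀ y ∈ S \ X, ∃ Q ∈ F, Q ⊆ X ∪ {y}) :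
    2 * m - 3 ≤ F.card := by
  have hX₁ : #(X \ Q₀) ≤ #{Q ∈ F | #(Q ∩ X) = 1} :=
    card_le_card_filter_card_inter_eq_one fun x hx => by
      obtain ⟨Q, hQF, hQ⟩ := hii x hx
      exact ⟨Q, hQF, inter_eq_singleton_of_subset_union_singleton hQ sdiff_disjoint
        (inter_nonempty_of_not_subset_sdiff (hF3 Q hQF).1 (hi Q hQF).2)⟩
  have hY₁ : #(S \ X) ≤ #{Q ∈ F | #(Q ∩ (S \ X)) = 1} :=
    card_le_card_filter_card_inter_eq_one fun y hy => by
      obtain ⟨Q, hQF, hQ⟩ := hiii y hy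
      exact ⟨Q, hQF, inter_eq_singleton_of_subset_union_singleton hQ disjoint_sdiff
        (inter_sdiff_nonempty_of_not_subset (hF3 Q hQF).1 (hi Q hQF).1)⟩
  have hdisj : Disjoint {Q ∈ F | #(Q ∩ X) = 1} {Q ∈ F | #(Q ∩ (S \ X)) = 1} :=
    disjoint_filter.2 fun Q hQF h₁ h₂ => by
      have hsplit := card_inter_add_card_inter_sdiff (hF3 Q hQF).1 X
      have hQ3 := (hF3 Q hQF).2
      omega
  have hF : #{Q ∈ F | #(Q ∩ X) = 1} + #{Q ∈ F | #(Q ∩ (S \ X)) = 1} ≤ #F := by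
    rw [← card_union_of_disjoint hdisj, filter_union_right]
    exact card_le_card (filter_subset _ _)
  have hXQ₀ := le_card_sdiff Q₀ X
  have hSX := le_card_sdiff X S
  omega

/-- Set-family counting from Case 2 of Lemma 3.4: with `|S| = 2m`, `|X| = m`,
`Q₀ ⊆ X` with `|Q₀| = 3`, a family `F` of 3-subsets of `S` none inside `X` or `S \ X`,
such that every `x ∈ X \ Q₀` has a member inside `(S \ X) ∪ {x}` and every `y ∈ S \ X`
has a member inside `X ∪ {y}`, satisfies `|F| ≥ 2m - 3`. -/
theorem stmt_7 {α : Type*} [DecidableEq α] (m : ℕ) (hm : 3 ≤ m)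
    (S : Finset α) (hS : S.card = 2 * m)
    (X : Finset α) (hXS : X ⊆ S) (hX : X.card = m)
    (Q₀ : Finset α) (hQ₀X : Q₀ ⊆ X) (hQ₀ : Q₀.card = 3)
    (F : Finset (Finset α))
    (hF3 : ∀ Q ∈ F, Q ⊆ S ∧ Q.card = 3)
    (hi : ∀ Q ∈ F, ¬ Q ⊆ X ∧ ¬ Q ⊆ S \ X)
    (hii : ∀ x ∈ X \ Q₀, ∃ Q ∈ F, Q ⊆ (S \ X) ∪ {x})
    (hiii : ∀ y ∈ S \ X, ∃ Q ∈ F, Q ⊆ X ∪ {y}) :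
    2 * m - 3 ≤ F.card :=
  stmt_7_general m S hS X hX Q₀ hQ₀ F hF3 hi hii hiii
end

section
/- Let S be a 6-element set and let T be a family of 6 distinct three-element subsets of S such that every 2-element subset of S is contained in at least one member of T. Then no two members of T are disjoint; equivalently, T never contains both a three-element subset and its complement in S. -/
/-- In a 6-triangle cover of the pairs of a 6-element set, no two members are disjoint
(equivalently, the cover never contains a triple together with its complement). -/
theorem stmt_13 (T : Finset (Finset (Fin 6))) (hT6 : T.card = 6)
    (hT3 : ∀ Q ∈ T, Q.card = 3)
    (hcov : ∀ p : Finset (Fin 6), p.card = 2 → ∃ Q ∈ T, p ⊆ Q) :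
    ∀ Q₁ ∈ T, ∀ Q₂ ∈ T, ¬ Disjoint Q₁ Q₂ := by
  classical
  intro Q₁ hQ₁ Q₂ hQ₂ hdis
  have h1 : Q₁.card = 3 := hT3 Q₁ hQ₁
  have h2 : Q₂.card = 3 := hT3 Q₂ hQ₂
  -- Q₂ = Q₁ᶜ
  have hsub : Q₂ ⊆ Q₁ᶜ := by
    intro x hx
    simp only [Finset.mem_compl]
    exact fun hx1 => (Finset.disjoint_left.mp hdis hx1) hx
  have hcard_compl : Q₁ᶜ.card = 3 := by
    rw [Finset.card_compl, h1]; simp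
  have hcomp : Q₂ = Q₁ᶜ := Finset.eq_of_subset_of_card_le hsub (by omega)
  have hne12 : Q₁ ≠ Q₂ := by
    intro h
    obtain ⟨x, hx⟩ := Finset.card_pos.mp (by omega : 0 < Q₁.card)
    exact (Finset.disjoint_left.mp hdis hx) (h ▸ hx)
  -- the other four triples
  set T' : Finset (Finset (Fin 6)) := T \ {Q₁, Q₂} with hT'
  have hpair_sub : ({Q₁, Q₂} : Finset (Finset (Fin 6))) ⊆ T := by
    intro Q hQ
    rcases Finset.mem_insert.mp hQ with h | h
    · exact h ▸ hQ₁
    · exact (Finset.mem_singleton.mp h) ▸ hQ₂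
  have hT'card : T'.card = 4 := by
    rw [hT', Finset.card_sdiff_of_subset hpair_sub, hT6, Finset.card_insert_of_notMem (by simpa using hne12), Finset.card_singleton]
  -- the choice function
  let f : Fin 6 × Fin 6 → Finset (Fin 6) := fun z =>
    if h : ∃ Q ∈ T, ({z.1, z.2} : Finset (Fin 6)) ⊆ Q then h.choose else ∅
  have hf : ∀ z ∈ Q₁ ×ˢ Q₂, f z ∈ T ∧ ({z.1, z.2} : Finset (Fin 6)) ⊆ f z := by
    intro z hz
    rw [Finset.mem_product] at hz
    have hne : z.1 ≠ z.2 := fun h => (Finset.disjoint_left.mp hdis hz.1) (h ▸ hz.2)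
    have hp2 : ({z.1, z.2} : Finset (Fin 6)).card = 2 := Finset.card_pair hne
    have hex : ∃ Q ∈ T, ({z.1, z.2} : Finset (Fin 6)) ⊆ Q := hcov _ hp2
    have : f z = hex.choose := dif_pos hex
    rw [this]
    obtain ⟨hQ, hsub⟩ := hex.choose_spec
    exact ⟨hQ, hsub⟩
  have hmaps : ∀ z ∈ Q₁ ×ˢ Q₂, f z ∈ T' := by
    intro z hz
    obtain ⟨hmem, hsub⟩ := hf z hz
    rw [Finset.mem_product] at hz
    have h1' : z.1 ∈ f z := hsub (by simp)
    have h2' : z.2 ∈ f z := hsub (by simp)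
    rw [hT', Finset.mem_sdiff]
    refine ⟨hmem, ?_⟩
    simp only [Finset.mem_insert, Finset.mem_singleton]
    push_neg
    constructor
    · intro h; exact (Finset.disjoint_left.mp hdis (h ▸ h2')) hz.2
    · intro h; exact (Finset.disjoint_left.mp hdis hz.1) (h ▸ h1')
  -- fiber bound
  have hfiber : ∀ Q ∈ T', ((Q₁ ×ˢ Q₂).filter (fun z => f z = Q)).card ≤ 2 := by
    intro Q hQ'
    have hQT : Q ∈ T := (Finset.mem_sdiff.mp hQ').1
    have hQ3 : Q.card = 3 := hT3 Q hQT
    have hsub2 : (Q₁ ×ˢ Q₂).filter (fun z => f z = Q) ⊆ (Q₁ ∩ Q) ×ˢ (Q₂ ∩ Q) := by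
      intro z hz
      rw [Finset.mem_filter] at hz
      obtain ⟨hzP, hzQ⟩ := hz
      obtain ⟨_, hsub⟩ := hf z hzP
      rw [Finset.mem_product] at hzP
      rw [Finset.mem_product]
      refine ⟨Finset.mem_inter.mpr ⟨hzP.1, ?_⟩, Finset.mem_inter.mpr ⟨hzP.2, ?_⟩⟩
      · exact hzQ ▸ hsub (by simp)
      · exact hzQ ▸ hsub (by simp)
    have hle := Finset.card_le_card hsub2
    rw [Finset.card_product] at hle
    -- (Q₁ ∩ Q).card + (Q₂ ∩ Q).card = 3
    have hdis' : Disjoint (Q₁ ∩ Q) (Q₂ ∩ Q) :=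
      Finset.disjoint_of_subset_left Finset.inter_subset_left
        (Finset.disjoint_of_subset_right Finset.inter_subset_left hdis)
    have hunion : (Q₁ ∩ Q) ∪ (Q₂ ∩ Q) = Q := by
      rw [← Finset.union_inter_distrib_right]
      have : Q₁ ∪ Q₂ = Finset.univ := by
        rw [hcomp, Finset.union_compl]
      rw [this, Finset.univ_inter]
    have hsum : (Q₁ ∩ Q).card + (Q₂ ∩ Q).card = 3 := by
      rw [← Finset.card_union_of_disjoint hdis', hunion, hQ3]
    set a := (Q₁ ∩ Q).card
    set b := (Q₂ ∩ Q).card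
    have ha3 : a ≤ 3 := by omega
    have hab : a * b ≤ 2 := by
      interval_cases a <;> omega
    omega
  have hkey := Finset.card_le_mul_card_image_of_maps_to hmaps 2 hfiber
  rw [Finset.card_product, h1, h2, hT'card] at hkey
  omega
end
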